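/- Let C ⊆ ℝ^d be a nontrivial closed convex cone and for each w ∈ C⁺ let e(w, X) ∈ ℝ depend on a random variable X, satisfying the equivariance e(w, AX) = e(Aᵀw, X) for every invertible matrix A. Define E_{−C}(X) = ⋂_{w ∈ C⁺} {z : wᵀz ≤ e(w, X)}. Then for every invertible d×d matrix A one has E_{−AC}(AX) = A·E_{−C}(X). -/
import Mathlib


open Matrix Set

/-- Linear equivariance of downward cone expectile sets:
E_{-AC}(AX) = A · E_{-C}(X). -/
theorem stmt4 {d : ℕ} {Ω : Type*} (C : Set (Fin d → ℝ))
    (hne : C.Nonempty) (hnt : C ≠ Set.univ)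
    (hclosed : IsClosed C) (hconv : Convex ℝ C)
    (hcone : ∀ x ∈ C, ∀ s : ℝ, 0 ≤ s → s • x ∈ C)
    (e : (Fin d → ℝ) → (Ω → (Fin d → ℝ)) → ℝ)
    (X : Ω → (Fin d → ℝ))
    (hequiv : ∀ (A : Matrix (Fin d) (Fin d) ℝ), IsUnit A →
      ∀ w : Fin d → ℝ, e w (fun ω => A.mulVec (X ω)) = e (Aᵀ.mulVec w) X)
    (A : Matrix (Fin d) (Fin d) ℝ) (hA : IsUnit A) :
    (⋂ w ∈ {w : Fin d → ℝ | ∀ z ∈ A.mulVec '' C, 0 ≤ w ⬝ᵥ z},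
        {z : Fin d → ℝ | w ⬝ᵥ z ≤ e w (fun ω => A.mulVec (X ω))}) =
      A.mulVec '' (⋂ w ∈ {w : Fin d → ℝ | ∀ z ∈ C, 0 ≤ w ⬝ᵥ z},
        {z : Fin d → ℝ | w ⬝ᵥ z ≤ e w X}) := by
  have hdet : IsUnit A.det := (Matrix.isUnit_iff_isUnit_det A).mp hA
  have hdetT : IsUnit Aᵀ.det := by rw [Matrix.det_transpose]; exact hdet
  have key : ∀ (w u : Fin d → ℝ), w ⬝ᵥ A.mulVec u = (Aᵀ.mulVec w) ⬝ᵥ u := by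
    intro w u
    rw [Matrix.dotProduct_mulVec, Matrix.mulVec_transpose]
  have hinv : ∀ y, A.mulVec (A⁻¹.mulVec y) = y := by
    intro y
    rw [Matrix.mulVec_mulVec, Matrix.mul_nonsing_inv _ hdet, Matrix.one_mulVec]
  have hTinv : ∀ v, Aᵀ.mulVec ((Aᵀ)⁻¹.mulVec v) = v := by
    intro v
    rw [Matrix.mulVec_mulVec, Matrix.mul_nonsing_inv _ hdetT, Matrix.one_mulVec]
  ext y
  simp only [Set.mem_iInter, Set.mem_image, Set.mem_setOf_eq]
  constructor
  · intro h
    refine ⟨A⁻¹.mulVec y, ?_, hinv y⟩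
    intro v hv
    set w := (Aᵀ)⁻¹.mulVec v with hw
    have hwv : Aᵀ.mulVec w = v := hTinv v
    have hwC : ∀ z ∈ A.mulVec '' C, 0 ≤ w ⬝ᵥ z := by
      rintro z ⟨x, hx, rfl⟩
      rw [key, hwv]
      exact hv x hx
    have := h w hwC
    rw [hequiv A hA w, hwv] at this
    calc v ⬝ᵥ A⁻¹.mulVec y = (Aᵀ.mulVec w) ⬝ᵥ A⁻¹.mulVec y := by rw [hwv]
      _ = w ⬝ᵥ A.mulVec (A⁻¹.mulVec y) := (key w _).symm
      _ = w ⬝ᵥ y := by rw [hinv]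
      _ ≤ e v X := this
  · rintro ⟨x, hx, rfl⟩

    intro w hw
    have hvC : ∀ z ∈ C, 0 ≤ (Aᵀ.mulVec w) ⬝ᵥ z := by
      intro z hz
      rw [← key]
      exact hw _ ⟨z, hz, rfl⟩
    have := hx (Aᵀ.mulVec w) hvC
    rw [key, hequiv A hA w]
    exact this
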